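/- If a triangle inscribed in E has incenter at the focus (c, 0) of E, then its inradius equals (b²/c²)(√(a² + c²) − a). -/

import Mathlib

noncomputable section

namespace PonceletIncircle

/-- Euclidean distance between two points of `ℝ × ℝ`. -/
def d (p q : ℝ × ℝ) : ℝ := Real.sqrt ((p.1 - q.1) ^ 2 + (p.2 - q.2) ^ 2)

/-- The triple `P₁ P₂ P₃` is affinely independent (a nondegenerate triangle). -/
def IsTriangle (P₁ P₂ P₃ : ℝ × ℝ) : Prop :=
  (P₂.1 - P₁.1) * (P₃.2 - P₁.2) - (P₂.2 - P₁.2) * (P₃.1 - P₁.1) ≠ 0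

/-- Membership in the ellipse centered at the origin with semiaxes `a` and `b`. -/
def OnEllipse (a b : ℝ) (p : ℝ × ℝ) : Prop := p.1 ^ 2 / a ^ 2 + p.2 ^ 2 / b ^ 2 = 1

/-- The incenter of the triangle, i.e. the center of its inscribed circle, given by the
standard sidelength-weighted barycentric formula. -/
def incenter (P₁ P₂ P₃ : ℝ × ℝ) : ℝ × ℝ :=
  ((d P₂ P₃ * P₁.1 + d P₃ P₁ * P₂.1 + d P₁ P₂ * P₃.1) / (d P₂ P₃ + d P₃ P₁ + d P₁ P₂),
   (d P₂ P₃ * P₁.2 + d P₃ P₁ * P₂.2 + d P₁ P₂ * P₃.2) / (d P₂ P₃ + d P₃ P₁ + d P₁ P₂))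

/-- The area of the triangle. -/
def area (P₁ P₂ P₃ : ℝ × ℝ) : ℝ :=
  |(P₂.1 - P₁.1) * (P₃.2 - P₁.2) - (P₂.2 - P₁.2) * (P₃.1 - P₁.1)| / 2

/-- The inradius of the triangle, i.e. the radius of its inscribed circle, equal to the
area divided by the semiperimeter. -/
def inradius (P₁ P₂ P₃ : ℝ × ℝ) : ℝ :=
  area P₁ P₂ P₃ / ((d P₂ P₃ + d P₃ P₁ + d P₁ P₂) / 2)

/-- The centroid of the triangle. -/
def centroid (P₁ P₂ P₃ : ℝ × ℝ) : ℝ × ℝ := (3⁻¹ : ℝ) • (P₁ + P₂ + P₃)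

end PonceletIncircle

open PonceletIncircle Real

/-!
The focus `F = (c, 0)` is the incenter, so it is at distance `r` from the three side lines: every
side is a chord of the ellipse tangent to the circle of radius `r` about `F`. In the rational
parametrization `t ↦ (a (1 - t²), 2 b t) / (1 + t²)` tangency of the chord with parameters `t, u` is
a symmetric biquadratic relation `K (t u)² + 2 L t u + M = N (t + u)²`, and three distinct
parameters satisfying it pairwise force `K M = N (2 L - N)`. Here this reads `f(r) f(-r) = 0` with
`f(r) = c² r² + 2 a b² r - b⁴`. The incircle lies inside the triangle, hence inside the ellipse, so
`c + r ≤ a`, which rules out `f(-r) = 0`; the positive root of `f` is the claimed value.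
-/

namespace PonceletIncircle

lemma biquadratic_triangle_relation {K L M N t₁ t₂ t₃ : ℝ}
    (h₁₂ : t₁ ≠ t₂) (h₂₃ : t₂ ≠ t₃) (h₃₁ : t₃ ≠ t₁)
    (e₁₂ : K * (t₁ * t₂) ^ 2 + 2 * L * (t₁ * t₂) + M = N * (t₁ + t₂) ^ 2)
    (e₂₃ : K * (t₂ * t₃) ^ 2 + 2 * L * (t₂ * t₃) + M = N * (t₂ + t₃) ^ 2)
    (e₃₁ : K * (t₃ * t₁) ^ 2 + 2 * L * (t₃ * t₁) + M = N * (t₃ + t₁) ^ 2) :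
    K * M = N * (2 * L - N) := by
  have f₁ : (t₂ + t₃) * (K * t₁ ^ 2 - N) + 2 * (L - N) * t₁ = 0 := by
    refine (mul_eq_zero.1 ?_).resolve_left (sub_ne_zero.2 h₂₃)
    linear_combination e₁₂ - e₃₁
  have f₂ : (t₃ + t₁) * (K * t₂ ^ 2 - N) + 2 * (L - N) * t₂ = 0 := by
    refine (mul_eq_zero.1 ?_).resolve_left (sub_ne_zero.2 h₃₁)
    linear_combination e₂₃ - e₁₂
  have f₃ : (t₁ + t₂) * (K * t₃ ^ 2 - N) + 2 * (L - N) * t₃ = 0 := by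
    refine (mul_eq_zero.1 ?_).resolve_left (sub_ne_zero.2 h₁₂)
    linear_combination e₃₁ - e₂₃
  have g : K * (t₁ * t₂ + t₂ * t₃ + t₃ * t₁) + 2 * L - N = 0 := by
    refine (mul_eq_zero.1 ?_).resolve_left (sub_ne_zero.2 h₁₂)
    linear_combination f₁ - f₂
  have k : K * (t₁ * t₂ * t₃) + N * (t₁ + t₂ + t₃) = 0 := by
    linear_combination (-1 / 3) * (f₁ + f₂ + f₃) + (1 / 3) * (t₁ + t₂ + t₃) * g
  linear_combination (K / 3) * (e₁₂ + e₂₃ + e₃₁)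
    - (1 / 3) * (K * (t₁ * t₂ + t₂ * t₃ + t₃ * t₁) + 3 * N) * g
    + (2 / 3) * K * (t₁ + t₂ + t₃) * k

def cross (u v : ℝ × ℝ) : ℝ := u.1 * v.2 - u.2 * v.1

/-- For `P ≠ Q`, the line `PQ` is at distance `r` from `F`. -/
def IsTangent (F : ℝ × ℝ) (r : ℝ) (P Q : ℝ × ℝ) : Prop :=
  r ^ 2 * d P Q ^ 2 = cross (P - F) (Q - F) ^ 2

lemma d_sq (p q : ℝ × ℝ) : d p q ^ 2 = (p.1 - q.1) ^ 2 + (p.2 - q.2) ^ 2 :=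
  Real.sq_sqrt (by positivity)

lemma d_comm (p q : ℝ × ℝ) : d p q = d q p := by
  unfold d; ring_nf

lemma d_pos {p q : ℝ × ℝ} (h : p ≠ q) : 0 < d p q := by
  refine (Real.sqrt_nonneg _).lt_of_ne fun h0 => h ?_
  have hsum := Real.sqrt_eq_zero'.1 h0.symm
  have h1 : p.1 - q.1 = 0 := by nlinarith [sq_nonneg (p.1 - q.1), sq_nonneg (p.2 - q.2)]
  have h2 : p.2 - q.2 = 0 := by nlinarith [sq_nonneg (p.1 - q.1), sq_nonneg (p.2 - q.2)]
  exact Prod.ext (sub_eq_zero.1 h1) (sub_eq_zero.1 h2)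

lemma d_nonneg (p q : ℝ × ℝ) : 0 ≤ d p q := Real.sqrt_nonneg _

lemma abs_snd_sub_le_d (p q : ℝ × ℝ) : |p.2 - q.2| ≤ d p q :=
  Real.abs_le_sqrt (le_add_of_nonneg_left (sq_nonneg _))

lemma IsTangent.symm {F P Q : ℝ × ℝ} {r : ℝ} (h : IsTangent F r P Q) : IsTangent F r Q P := by
  unfold IsTangent cross at *
  rw [d_comm, h]; ring

section Triangle

variable {P₁ P₂ P₃ : ℝ × ℝ}

lemma isTriangle_iff_cross : IsTriangle P₁ P₂ P₃ ↔ cross (P₂ - P₁) (P₃ - P₁) ≠ 0 := Iff.rfl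

lemma cross_rotate : cross (P₃ - P₂) (P₁ - P₂) = cross (P₂ - P₁) (P₃ - P₁) := by
  simp only [cross, Prod.fst_sub, Prod.snd_sub]; ring

lemma IsTriangle.rotate (h : IsTriangle P₁ P₂ P₃) : IsTriangle P₂ P₃ P₁ := by
  rwa [isTriangle_iff_cross, cross_rotate]

lemma IsTriangle.ne (h : IsTriangle P₁ P₂ P₃) : P₁ ≠ P₂ := by
  rintro rfl; simp [IsTriangle] at h

lemma incenter_rotate : incenter P₂ P₃ P₁ = incenter P₁ P₂ P₃ := by
  unfold incenter; congr 1 <;> ring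

lemma inradius_rotate : inradius P₂ P₃ P₁ = inradius P₁ P₂ P₃ := by
  unfold inradius area
  rw [show (P₃.1 - P₂.1) * (P₁.2 - P₂.2) - (P₃.2 - P₂.2) * (P₁.1 - P₂.1)
      = (P₂.1 - P₁.1) * (P₃.2 - P₁.2) - (P₂.2 - P₁.2) * (P₃.1 - P₁.1) by ring]
  ring

lemma IsTriangle.perimeter_pos (h : IsTriangle P₁ P₂ P₃) : 0 < d P₂ P₃ + d P₃ P₁ + d P₁ P₂ := by
  linarith [d_pos h.ne, d_nonneg P₂ P₃, d_nonneg P₃ P₁]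

lemma inradius_mul_perimeter (h : IsTriangle P₁ P₂ P₃) :
    inradius P₁ P₂ P₃ * (d P₂ P₃ + d P₃ P₁ + d P₁ P₂) = |cross (P₂ - P₁) (P₃ - P₁)| := by
  have := h.perimeter_pos.ne'
  unfold inradius area; field_simp; rfl

lemma IsTriangle.inradius_pos (h : IsTriangle P₁ P₂ P₃) : 0 < inradius P₁ P₂ P₃ :=
  div_pos (div_pos (abs_pos.2 h) two_pos) (half_pos h.perimeter_pos)

lemma cross_sub_incenter_mul_perimeter (h : IsTriangle P₁ P₂ P₃) :
    cross (P₂ - incenter P₁ P₂ P₃) (P₃ - incenter P₁ P₂ P₃) * (d P₂ P₃ + d P₃ P₁ + d P₁ P₂)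
      = d P₂ P₃ * cross (P₂ - P₁) (P₃ - P₁) := by
  have := h.perimeter_pos.ne'
  simp only [incenter, cross, Prod.fst_sub, Prod.snd_sub]
  field_simp
  ring

lemma IsTriangle.isTangent_incircle (h : IsTriangle P₁ P₂ P₃) :
    IsTangent (incenter P₁ P₂ P₃) (inradius P₁ P₂ P₃) P₂ P₃ := by
  have hs := h.perimeter_pos.ne'
  have key := cross_sub_incenter_mul_perimeter h
  have hr := inradius_mul_perimeter h
  unfold IsTangent
  refine mul_right_cancel₀ (pow_ne_zero 2 hs) ?_
  calc _ = d P₂ P₃ ^ 2 * (inradius P₁ P₂ P₃ * (d P₂ P₃ + d P₃ P₁ + d P₁ P₂)) ^ 2 := by ring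
    _ = _ := by rw [hr, sq_abs, ← mul_pow, ← mul_pow, key]

lemma IsTriangle.sides_isTangent_incircle (h : IsTriangle P₁ P₂ P₃) :
    IsTangent (incenter P₁ P₂ P₃) (inradius P₁ P₂ P₃) P₁ P₂ ∧
      IsTangent (incenter P₁ P₂ P₃) (inradius P₁ P₂ P₃) P₂ P₃ ∧
      IsTangent (incenter P₁ P₂ P₃) (inradius P₁ P₂ P₃) P₃ P₁ := by
  have h₁₂ := h.rotate.rotate.isTangent_incircle
  have h₃₁ := h.rotate.isTangent_incircle
  rw [incenter_rotate, incenter_rotate, inradius_rotate, inradius_rotate] at h₁₂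
  rw [incenter_rotate, inradius_rotate] at h₃₁
  exact ⟨h₁₂, h.isTangent_incircle, h₃₁⟩

/-- The hypotheses say that `Q` lies in the closed triangle. -/
lemma fst_le_of_cross_mul_nonneg (h : IsTriangle P₁ P₂ P₃) {Q : ℝ × ℝ} {m : ℝ}
    (h₁ : 0 ≤ cross (P₂ - Q) (P₃ - Q) * cross (P₂ - P₁) (P₃ - P₁))
    (h₂ : 0 ≤ cross (P₃ - Q) (P₁ - Q) * cross (P₂ - P₁) (P₃ - P₁))
    (h₃ : 0 ≤ cross (P₁ - Q) (P₂ - Q) * cross (P₂ - P₁) (P₃ - P₁))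
    (hm₁ : P₁.1 ≤ m) (hm₂ : P₂.1 ≤ m) (hm₃ : P₃.1 ≤ m) : Q.1 ≤ m := by
  set T := cross (P₂ - P₁) (P₃ - P₁)
  have hbary : T ^ 2 * (m - Q.1) = cross (P₂ - Q) (P₃ - Q) * T * (m - P₁.1)
      + cross (P₃ - Q) (P₁ - Q) * T * (m - P₂.1) + cross (P₁ - Q) (P₂ - Q) * T * (m - P₃.1) := by
    simp only [T, cross, Prod.fst_sub, Prod.snd_sub]; ring
  have hT : 0 < T ^ 2 := by have : T ≠ 0 := h; positivity
  have : 0 ≤ T ^ 2 * (m - Q.1) := by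
    rw [hbary]
    have := mul_nonneg h₁ (sub_nonneg.2 hm₁)
    have := mul_nonneg h₂ (sub_nonneg.2 hm₂)
    have := mul_nonneg h₃ (sub_nonneg.2 hm₃)
    positivity
  linarith [nonneg_of_mul_nonneg_right this hT]

lemma cross_sub_incircle_point_mul_nonneg (h : IsTriangle P₁ P₂ P₃) :
    0 ≤ cross (P₂ - (incenter P₁ P₂ P₃ + (inradius P₁ P₂ P₃, 0)))
      (P₃ - (incenter P₁ P₂ P₃ + (inradius P₁ P₂ P₃, 0))) * cross (P₂ - P₁) (P₃ - P₁) := by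
  set I := incenter P₁ P₂ P₃
  set r := inradius P₁ P₂ P₃
  set T := cross (P₂ - P₁) (P₃ - P₁)
  have hshift : cross (P₂ - (I + (r, 0))) (P₃ - (I + (r, 0)))
      = cross (P₂ - I) (P₃ - I) - r * (P₃.2 - P₂.2) := by
    simp only [cross, Prod.fst_sub, Prod.snd_sub, Prod.fst_add, Prod.snd_add]; ring
  have hside : (P₃.2 - P₂.2) * T ≤ d P₂ P₃ * |T| := calc
    (P₃.2 - P₂.2) * T ≤ |P₃.2 - P₂.2| * |T| := by rw [← abs_mul]; exact le_abs_self _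
    _ ≤ d P₂ P₃ * |T| := by
      rw [d_comm]; exact mul_le_mul_of_nonneg_right (abs_snd_sub_le_d _ _) (abs_nonneg _)
  have hcross := cross_sub_incenter_mul_perimeter h
  have hr := inradius_mul_perimeter h
  refine nonneg_of_mul_nonneg_left ?_ h.perimeter_pos
  calc 0 = d P₂ P₃ * |T| * |T| - |T| * (d P₂ P₃ * |T|) := by ring
    _ ≤ d P₂ P₃ * |T| * |T| - |T| * ((P₃.2 - P₂.2) * T) := by gcongr
    _ = _ := by
      rw [hshift]
      linear_combination (-T) * hcross + ((P₃.2 - P₂.2) * T) * hr + d P₂ P₃ * abs_mul_abs_self T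

lemma incenter_fst_add_inradius_le (h : IsTriangle P₁ P₂ P₃) {m : ℝ}
    (hm₁ : P₁.1 ≤ m) (hm₂ : P₂.1 ≤ m) (hm₃ : P₃.1 ≤ m) :
    (incenter P₁ P₂ P₃).1 + inradius P₁ P₂ P₃ ≤ m := by
  have h₂ := cross_sub_incircle_point_mul_nonneg h.rotate
  have h₃ := cross_sub_incircle_point_mul_nonneg h.rotate.rotate
  rw [incenter_rotate, inradius_rotate, cross_rotate (P₂ := P₂)] at h₂
  rw [incenter_rotate, incenter_rotate, inradius_rotate, inradius_rotate, cross_rotate (P₂ := P₃),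
    cross_rotate (P₂ := P₂)] at h₃
  exact fst_le_of_cross_mul_nonneg h (cross_sub_incircle_point_mul_nonneg h) h₂ h₃ hm₁ hm₂ hm₃

end Triangle

section Ellipse

variable {a b c r : ℝ}

def ellipsePoint (a b t : ℝ) : ℝ × ℝ := (a * (1 - t ^ 2) / (1 + t ^ 2), 2 * b * t / (1 + t ^ 2))

lemma OnEllipse.fst_le (ha : 0 < a) {p : ℝ × ℝ} (h : OnEllipse a b p) : p.1 ≤ a := by
  have h1 : p.1 ^ 2 / a ^ 2 ≤ 1 := by
    unfold OnEllipse at h; linarith [div_nonneg (sq_nonneg p.2) (sq_nonneg b)]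
  rw [div_le_one (by positivity)] at h1
  exact le_of_sq_le_sq h1 ha.le

lemma OnEllipse.exists_eq_ellipsePoint (ha : a ≠ 0) (hb : b ≠ 0) {p : ℝ × ℝ}
    (h : OnEllipse a b p) (hp : p ≠ (-a, 0)) : ∃ t, p = ellipsePoint a b t := by
  obtain ⟨x, y⟩ := p
  have hell : b ^ 2 * x ^ 2 + a ^ 2 * y ^ 2 = a ^ 2 * b ^ 2 := by
    unfold OnEllipse at h; field_simp at h; linear_combination h
  have hx : a + x ≠ 0 := by
    intro hx
    obtain rfl : x = -a := by linarith
    have : y ^ 2 = 0 := by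
      refine (mul_eq_zero.1 ?_).resolve_left (pow_ne_zero 2 ha)
      linear_combination hell
    exact hp (by rw [pow_eq_zero_iff two_ne_zero |>.1 this])
  set t := a * y / (b * (a + x))
  have hty : t * (b * (a + x)) = a * y := div_mul_cancel₀ _ (mul_ne_zero hb hx)
  have ht2 : t ^ 2 * (a + x) = a - x := by
    refine mul_left_cancel₀ (pow_ne_zero 2 (mul_ne_zero hb hx)) ?_
    linear_combination (a + x) * (t * (b * (a + x)) + a * y) * hty + (a + x) * hell
  have hq : 1 + t ^ 2 ≠ 0 := by positivity
  refine ⟨t, Prod.ext ?_ ?_⟩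
  · rw [ellipsePoint, eq_div_iff hq]; linear_combination ht2
  · rw [ellipsePoint, eq_div_iff hq]
    exact mul_left_cancel₀ hx (by linear_combination y * ht2 - 2 * hty)

lemma d_ellipsePoint_sq (a b t u : ℝ) :
    d (ellipsePoint a b t) (ellipsePoint a b u) ^ 2 * ((1 + t ^ 2) * (1 + u ^ 2)) ^ 2
      = 4 * (t - u) ^ 2 * (b ^ 2 * (1 - t * u) ^ 2 + a ^ 2 * (t + u) ^ 2) := by
  rw [d_sq]; simp only [ellipsePoint]; field_simp; ring

lemma cross_ellipsePoint (a b c t u : ℝ) :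
    cross (ellipsePoint a b t - (c, 0)) (ellipsePoint a b u - (c, 0)) * ((1 + t ^ 2) * (1 + u ^ 2))
      = 2 * b * (u - t) * ((a - c) + (a + c) * t * u) := by
  simp only [ellipsePoint, cross, Prod.fst_sub, Prod.snd_sub]; field_simp; ring

lemma IsTangent.biquadratic_of_ellipsePoint {t u : ℝ} (htu : t ≠ u)
    (h : IsTangent (c, 0) r (ellipsePoint a b t) (ellipsePoint a b u)) :
    b ^ 2 * ((a + c) ^ 2 - r ^ 2) * (t * u) ^ 2 + 2 * (b ^ 2 * (a ^ 2 - c ^ 2 + r ^ 2)) * (t * u)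
      + b ^ 2 * ((a - c) ^ 2 - r ^ 2) = a ^ 2 * r ^ 2 * (t + u) ^ 2 := by
  unfold IsTangent at h
  have hd := d_ellipsePoint_sq a b t u
  have hc := cross_ellipsePoint a b c t u
  have h4 : 4 * (t - u) ^ 2 ≠ 0 := by have := sub_ne_zero.2 htu; positivity
  set X := cross (ellipsePoint a b t - (c, 0)) (ellipsePoint a b u - (c, 0))
  set D := (1 + t ^ 2) * (1 + u ^ 2)
  refine mul_left_cancel₀ h4 ?_
  linear_combination (-D ^ 2) * h + r ^ 2 * hd
    - (X * D + 2 * b * (u - t) * ((a - c) + (a + c) * t * u)) * hc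

end Ellipse

section Focal

variable {a b c r : ℝ} {P₁ P₂ P₃ : ℝ × ℝ}

def focalPoly (a b c r : ℝ) : ℝ := c ^ 2 * r ^ 2 + 2 * a * b ^ 2 * r - b ^ 4

lemma focalPoly_mul_focalPoly_neg_of_ne_vertex (ha : a ≠ 0) (hb : b ≠ 0)
    (hc : c ^ 2 = a ^ 2 - b ^ 2) (h₁₂ : P₁ ≠ P₂) (h₂₃ : P₂ ≠ P₃) (h₃₁ : P₃ ≠ P₁)
    (hP₁ : OnEllipse a b P₁) (hP₂ : OnEllipse a b P₂) (hP₃ : OnEllipse a b P₃)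
    (hv₁ : P₁ ≠ (-a, 0)) (hv₂ : P₂ ≠ (-a, 0)) (hv₃ : P₃ ≠ (-a, 0))
    (t₁₂ : IsTangent (c, 0) r P₁ P₂) (t₂₃ : IsTangent (c, 0) r P₂ P₃)
    (t₃₁ : IsTangent (c, 0) r P₃ P₁) :
    focalPoly a b c r * focalPoly a b c (-r) = 0 := by
  obtain ⟨t₁, rfl⟩ := hP₁.exists_eq_ellipsePoint ha hb hv₁
  obtain ⟨t₂, rfl⟩ := hP₂.exists_eq_ellipsePoint ha hb hv₂
  obtain ⟨t₃, rfl⟩ := hP₃.exists_eq_ellipsePoint ha hb hv₃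
  have ht₁₂ : t₁ ≠ t₂ := fun h => h₁₂ (h ▸ rfl)
  have ht₂₃ : t₂ ≠ t₃ := fun h => h₂₃ (h ▸ rfl)
  have ht₃₁ : t₃ ≠ t₁ := fun h => h₃₁ (h ▸ rfl)
  have key := biquadratic_triangle_relation ht₁₂ ht₂₃ ht₃₁ (t₁₂.biquadratic_of_ellipsePoint ht₁₂)
    (t₂₃.biquadratic_of_ellipsePoint ht₂₃) (t₃₁.biquadratic_of_ellipsePoint ht₃₁)
  unfold focalPoly
  linear_combination key + (r ^ 4 * (a ^ 2 - b ^ 2 + c ^ 2) + b ^ 4 * (a ^ 2 + b ^ 2 - c ^ 2)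
    - 2 * a ^ 2 * b ^ 2 * r ^ 2) * hc

def reflect (p : ℝ × ℝ) : ℝ × ℝ := (-p.1, p.2)

lemma reflect_injective : Function.Injective reflect := fun p q h => by
  simp only [reflect, Prod.mk.injEq, neg_inj] at h
  exact Prod.ext h.1 h.2

lemma OnEllipse.reflect {p : ℝ × ℝ} (h : OnEllipse a b p) : OnEllipse a b (reflect p) := by
  simpa [OnEllipse, PonceletIncircle.reflect] using h

lemma reflect_ne_neg_vertex {p : ℝ × ℝ} (h : p ≠ (a, 0)) : reflect p ≠ (-a, 0) := by
  rw [Ne, ← reflect_injective.eq_iff.not]; simpa [reflect] using h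

lemma d_reflect (p q : ℝ × ℝ) : d (reflect p) (reflect q) = d p q := by
  simp only [d, reflect]; ring_nf

lemma IsTangent.reflect {P Q : ℝ × ℝ} (h : IsTangent (c, 0) r P Q) :
    IsTangent (-c, 0) r (reflect P) (reflect Q) := by
  unfold IsTangent at *
  rw [d_reflect, h]
  simp only [cross, PonceletIncircle.reflect, Prod.fst_sub, Prod.snd_sub]; ring

lemma IsTangent.ne_vertex (ha : a ≠ 0) (hr : r ≠ 0) {Q : ℝ × ℝ}
    (h : IsTangent (c, 0) r (-a, 0) Q) : Q ≠ (a, 0) := by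
  rintro rfl
  unfold IsTangent at h
  rw [d_sq] at h
  simp only [cross, Prod.fst_sub, Prod.snd_sub, mul_zero, zero_mul, sub_self] at h
  have : r ^ 2 * (4 * a ^ 2) = 0 := by linear_combination h
  simp_all

lemma focalPoly_mul_focalPoly_neg (ha : a ≠ 0) (hb : b ≠ 0) (hr : r ≠ 0)
    (hc : c ^ 2 = a ^ 2 - b ^ 2) (h₁₂ : P₁ ≠ P₂) (h₂₃ : P₂ ≠ P₃) (h₃₁ : P₃ ≠ P₁)
    (hP₁ : OnEllipse a b P₁) (hP₂ : OnEllipse a b P₂) (hP₃ : OnEllipse a b P₃)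
    (t₁₂ : IsTangent (c, 0) r P₁ P₂) (t₂₃ : IsTangent (c, 0) r P₂ P₃)
    (t₃₁ : IsTangent (c, 0) r P₃ P₁) :
    focalPoly a b c r * focalPoly a b c (-r) = 0 := by
  by_cases hv : P₁ ≠ (-a, 0) ∧ P₂ ≠ (-a, 0) ∧ P₃ ≠ (-a, 0)
  · exact focalPoly_mul_focalPoly_neg_of_ne_vertex ha hb hc h₁₂ h₂₃ h₃₁ hP₁ hP₂ hP₃
      hv.1 hv.2.1 hv.2.2 t₁₂ t₂₃ t₃₁
  -- `(-a, 0)` is the one point `ellipsePoint` misses; the reflection `x ↦ -x` swaps it with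
  -- `(a, 0)`, which cannot be a vertex as well, and the focus with the other focus.
  have hv' : P₁ ≠ (a, 0) ∧ P₂ ≠ (a, 0) ∧ P₃ ≠ (a, 0) := by
    have hne : ((-a, 0) : ℝ × ℝ) ≠ (a, 0) := fun h => ha (by
      have := congrArg Prod.fst h; simp only at this; linarith)
    simp only [not_and_or, not_not] at hv
    rcases hv with rfl | rfl | rfl
    · exact ⟨hne, t₁₂.ne_vertex ha hr, t₃₁.symm.ne_vertex ha hr⟩
    · exact ⟨t₁₂.symm.ne_vertex ha hr, hne, t₂₃.ne_vertex ha hr⟩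
    · exact ⟨t₃₁.ne_vertex ha hr, t₂₃.symm.ne_vertex ha hr, hne⟩
  have := focalPoly_mul_focalPoly_neg_of_ne_vertex (c := -c) ha hb (by rw [neg_sq, hc])
    (reflect_injective.ne h₁₂) (reflect_injective.ne h₂₃) (reflect_injective.ne h₃₁)
    hP₁.reflect hP₂.reflect hP₃.reflect (reflect_ne_neg_vertex hv'.1)
    (reflect_ne_neg_vertex hv'.2.1) (reflect_ne_neg_vertex hv'.2.2)
    t₁₂.reflect t₂₃.reflect t₃₁.reflect
  simpa only [focalPoly, neg_sq] using this

lemma focalPoly_neg_lt_zero (hc : 0 < c) (hc2 : c ^ 2 = a ^ 2 - b ^ 2) (hr : 0 < r)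
    (hra : c + r ≤ a) : focalPoly a b c (-r) < 0 := by
  have hcr : c * r < b ^ 2 := by nlinarith
  have hsq : (c * r) ^ 2 < (b ^ 2) ^ 2 := pow_lt_pow_left₀ hcr (by positivity) two_ne_zero
  have hlin : 0 < a * b ^ 2 * r := mul_pos (mul_pos (by linarith) (by nlinarith)) hr
  unfold focalPoly
  linear_combination hsq + 2 * hlin

lemma eq_of_focalPoly_eq_zero (ha : 0 ≤ a) (hb : b ≠ 0) (hc : c ≠ 0) (hr : 0 ≤ r)
    (h : focalPoly a b c r = 0) :
    r = b ^ 2 / c ^ 2 * (Real.sqrt (a ^ 2 + c ^ 2) - a) := by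
  have hsqrt : Real.sqrt (a ^ 2 + c ^ 2) = (c ^ 2 * r + a * b ^ 2) / b ^ 2 := by
    rw [Real.sqrt_eq_iff_eq_sq (by positivity) (by positivity)]
    unfold focalPoly at h
    field_simp
    linear_combination (-c ^ 2) * h
  rw [hsqrt]
  field_simp
  ring

end Focal

end PonceletIncircle

theorem stmt_10 (a b : ℝ) (hb : 0 < b) (hba : b < a)
    (c : ℝ) (hc : c = Real.sqrt (a ^ 2 - b ^ 2))
    (P₁ P₂ P₃ : ℝ × ℝ) (hT : IsTriangle P₁ P₂ P₃)
    (hP₁ : OnEllipse a b P₁) (hP₂ : OnEllipse a b P₂) (hP₃ : OnEllipse a b P₃)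
    (hI : incenter P₁ P₂ P₃ = (c, (0 : ℝ))) :
    inradius P₁ P₂ P₃ = b ^ 2 / c ^ 2 * (Real.sqrt (a ^ 2 + c ^ 2) - a) := by
  have ha : 0 < a := hb.trans hba
  have hab : 0 < a ^ 2 - b ^ 2 := by nlinarith
  have hc2 : c ^ 2 = a ^ 2 - b ^ 2 := by rw [hc, sq_sqrt hab.le]
  have hc0 : 0 < c := by rw [hc]; exact sqrt_pos.2 hab
  have hr := hT.inradius_pos
  obtain ⟨t₁₂, t₂₃, t₃₁⟩ := hT.sides_isTangent_incircle
  rw [hI] at t₁₂ t₂₃ t₃₁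
  have hrel := focalPoly_mul_focalPoly_neg ha.ne' hb.ne' hr.ne' hc2 hT.ne hT.rotate.ne
    hT.rotate.rotate.ne hP₁ hP₂ hP₃ t₁₂ t₂₃ t₃₁
  have hbound := incenter_fst_add_inradius_le hT (hP₁.fst_le ha) (hP₂.fst_le ha) (hP₃.fst_le ha)
  rw [hI] at hbound
  have hpoly := (mul_eq_zero.1 hrel).resolve_right (focalPoly_neg_lt_zero hc0 hc2 hr hbound).ne
  exact eq_of_focalPoly_eq_zero ha.le hb.ne' hc0.ne' hr.le hpoly
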